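/- Let κ < 0 and τ ∈ ℝ. The map Θ(x,y,z) = ( (4/√(−κ))·y / ((2/√(−κ) + x)² + y²), (−4/κ − x² − y²) / ((2/√(−κ) + x)² + y²), z + (4τ/κ)·arccos( y / √((2/√(−κ) + x)² + y²) ) ) is a bijection from the solid cylinder {(x,y,z) ∈ ℝ³ : x² + y² < 4/(−κ)} onto the half-space {(x,y,z) ∈ ℝ³ : y > 0}. -/
import Mathlib


/-- The explicit map from the Cartan model of `E(κ,τ)`, `κ < 0`, to the
half-space model. -/
noncomputable def diskToHalfSpace (κ τ : ℝ) (p : ℝ × ℝ × ℝ) : ℝ × ℝ × ℝ :=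
  ((4 / Real.sqrt (-κ)) * p.2.1 / ((2 / Real.sqrt (-κ) + p.1) ^ 2 + p.2.1 ^ 2),
   (-4 / κ - p.1 ^ 2 - p.2.1 ^ 2) / ((2 / Real.sqrt (-κ) + p.1) ^ 2 + p.2.1 ^ 2),
   p.2.2 + (4 * τ / κ) *
     Real.arccos (p.2.1 / Real.sqrt ((2 / Real.sqrt (-κ) + p.1) ^ 2 + p.2.1 ^ 2)))

/-- The inverse map, from the half-space model to the Cartan (disk) model. -/
noncomputable def halfSpaceToDisk (κ τ : ℝ) (q : ℝ × ℝ × ℝ) : ℝ × ℝ × ℝ :=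
  (2 / Real.sqrt (-κ) * (1 - q.1 ^ 2 - q.2.1 ^ 2) / (q.1 ^ 2 + (1 + q.2.1) ^ 2),
   2 * (2 / Real.sqrt (-κ)) * q.1 / (q.1 ^ 2 + (1 + q.2.1) ^ 2),
   q.2.2 - (4 * τ / κ) *
     Real.arccos ((2 * (2 / Real.sqrt (-κ)) * q.1 / (q.1 ^ 2 + (1 + q.2.1) ^ 2)) /
       Real.sqrt ((2 / Real.sqrt (-κ) +
           2 / Real.sqrt (-κ) * (1 - q.1 ^ 2 - q.2.1 ^ 2) / (q.1 ^ 2 + (1 + q.2.1) ^ 2)) ^ 2 +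
         (2 * (2 / Real.sqrt (-κ)) * q.1 / (q.1 ^ 2 + (1 + q.2.1) ^ 2)) ^ 2)))

lemma d1_pos (R x y : ℝ) (h : x ^ 2 + y ^ 2 < R ^ 2) :
    0 < (R + x) ^ 2 + y ^ 2 := by
  rcases lt_or_ge 0 ((R + x) ^ 2 + y ^ 2) with h' | h'
  · exact h'
  · have h1 : (R + x) ^ 2 = 0 := le_antisymm (by nlinarith [sq_nonneg y]) (sq_nonneg _)
    have h2 : y ^ 2 = 0 := by nlinarith [sq_nonneg (R + x)]
    have h3 : R + x = 0 := sq_eq_zero_iff.mp h1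
    have h4 : x = -R := by linarith
    rw [h4] at h
    nlinarith

lemma fg_aux (R x y u v : ℝ) (hR : 0 < R) (h : x ^ 2 + y ^ 2 < R ^ 2)
    (hu : u = 2 * R * y / ((R + x) ^ 2 + y ^ 2))
    (hv : v = (R ^ 2 - x ^ 2 - y ^ 2) / ((R + x) ^ 2 + y ^ 2)) :
    R * (1 - u ^ 2 - v ^ 2) / (u ^ 2 + (1 + v) ^ 2) = x ∧
      2 * R * u / (u ^ 2 + (1 + v) ^ 2) = y := by
  have hD1 := d1_pos R x y h
  have hD1' : (R + x) ^ 2 + y ^ 2 ≠ 0 := ne_of_gt hD1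
  have hD2 : u ^ 2 + (1 + v) ^ 2 = 4 * R ^ 2 / ((R + x) ^ 2 + y ^ 2) := by
    subst hu hv; field_simp; ring
  subst hu hv
  rw [hD2]
  constructor <;> (field_simp; ring)

lemma gf_aux (R u v x y : ℝ) (hR : 0 < R) (hv : 0 < v)
    (hx : x = R * (1 - u ^ 2 - v ^ 2) / (u ^ 2 + (1 + v) ^ 2))
    (hy : y = 2 * R * u / (u ^ 2 + (1 + v) ^ 2)) :
    2 * R * y / ((R + x) ^ 2 + y ^ 2) = u ∧
      (R ^ 2 - x ^ 2 - y ^ 2) / ((R + x) ^ 2 + y ^ 2) = v ∧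
      x ^ 2 + y ^ 2 < R ^ 2 := by
  have hD2 : 0 < u ^ 2 + (1 + v) ^ 2 := by positivity
  have hD2' : u ^ 2 + (1 + v) ^ 2 ≠ 0 := ne_of_gt hD2
  have hD1 : (R + x) ^ 2 + y ^ 2 = 4 * R ^ 2 / (u ^ 2 + (1 + v) ^ 2) := by
    subst hx hy; field_simp; ring
  subst hx hy
  rw [hD1]
  refine ⟨by field_simp; ring, by field_simp; ring, ?_⟩
  have h1 : (R * (1 - u ^ 2 - v ^ 2) / (u ^ 2 + (1 + v) ^ 2)) ^ 2 +
      (2 * R * u / (u ^ 2 + (1 + v) ^ 2)) ^ 2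
        = R ^ 2 - 4 * R ^ 2 * v / (u ^ 2 + (1 + v) ^ 2) := by
    field_simp; ring
  rw [h1]
  have h2 : 0 < 4 * R ^ 2 * v / (u ^ 2 + (1 + v) ^ 2) := by positivity
  linarith

/-- For `κ < 0`, the map `Θ` is a bijection from the solid cylinder
`{x² + y² < 4/(−κ)}` onto the half-space `{y > 0}`. -/
theorem diskToHalfSpace_bijOn (κ τ : ℝ) (hκ : κ < 0) :
    Set.BijOn (diskToHalfSpace κ τ)
      {p : ℝ × ℝ × ℝ | p.1 ^ 2 + p.2.1 ^ 2 < 4 / (-κ)}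
      {p : ℝ × ℝ × ℝ | 0 < p.2.1} := by
  have hκ' : (0:ℝ) < -κ := by linarith
  have hr : 0 < Real.sqrt (-κ) := Real.sqrt_pos.2 hκ'
  have hr2 : Real.sqrt (-κ) ^ 2 = -κ := Real.sq_sqrt hκ'.le
  have hR : 0 < 2 / Real.sqrt (-κ) := by positivity
  have hRsq : (2 / Real.sqrt (-κ)) ^ 2 = 4 / (-κ) := by
    rw [div_pow, hr2]; norm_num
  have hRsq' : -4 / κ = (2 / Real.sqrt (-κ)) ^ 2 := by
    rw [hRsq, div_neg, neg_div]
  have h4 : (4:ℝ) / Real.sqrt (-κ) = 2 * (2 / Real.sqrt (-κ)) := by ring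
  have hset : {p : ℝ × ℝ × ℝ | p.1 ^ 2 + p.2.1 ^ 2 < 4 / (-κ)}
      = {p : ℝ × ℝ × ℝ | p.1 ^ 2 + p.2.1 ^ 2 < (2 / Real.sqrt (-κ)) ^ 2} := by
    ext p
    rw [Set.mem_setOf_eq, Set.mem_setOf_eq, hRsq]
  rw [hset]
  refine Set.InvOn.bijOn (f' := halfSpaceToDisk κ τ) ⟨?_, ?_⟩ ?_ ?_
  · -- left inverse
    rintro ⟨x, y, z⟩ hp
    simp only [Set.mem_setOf_eq] at hp
    obtain ⟨hX, hY⟩ := fg_aux (2 / Real.sqrt (-κ)) x y _ _ hR hp rfl rfl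
    simp only [diskToHalfSpace, halfSpaceToDisk, h4, hRsq']
    simp only [Prod.mk.injEq]
    refine ⟨hX, hY, ?_⟩
    rw [hX, hY]
    ring
  · -- right inverse
    rintro ⟨u, v, w⟩ hq
    simp only [Set.mem_setOf_eq] at hq
    obtain ⟨hU, hV, hlt⟩ := gf_aux (2 / Real.sqrt (-κ)) u v _ _ hR hq rfl rfl
    simp only [diskToHalfSpace, halfSpaceToDisk, h4, hRsq']
    simp only [Prod.mk.injEq]
    exact ⟨hU, hV, by ring⟩
  · -- MapsTo f
    rintro ⟨x, y, z⟩ hp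
    simp only [Set.mem_setOf_eq] at hp ⊢
    simp only [diskToHalfSpace, hRsq']
    exact div_pos (by nlinarith) (d1_pos _ _ _ hp)
  · -- MapsTo g
    rintro ⟨u, v, w⟩ hq
    simp only [Set.mem_setOf_eq] at hq ⊢
    obtain ⟨-, -, hlt⟩ := gf_aux (2 / Real.sqrt (-κ)) u v _ _ hR hq rfl rfl
    simpa [halfSpaceToDisk] using hlt
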